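/- The difference between the AUC and the separation probability is always between 0 and 1/2: 0 ≤ A − Pr ≤ 1/2. -/

import Mathlib

open MeasureTheory Set

/-- The uniform probability of a subset of a finite type. -/
noncomputable def unifP {Ω : Type*} [Fintype Ω] (E : Set Ω) : ℝ :=
  E.ncard / Fintype.card Ω

/-- The true positive rate `T_f(t) = μ(f⁻¹[t,1] ∩ P)/μ(P)`. -/
noncomputable def Tf {Ω : Type*} [Fintype Ω] (f : Ω → ℝ) (P : Set Ω) (t : ℝ) : ℝ :=
  unifP (f ⁻¹' Set.Icc t 1 ∩ P) / unifP P

/-- The false positive rate `F_f(t) = μ(f⁻¹[t,1] ∩ Pᶜ)/μ(Pᶜ)`. -/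
noncomputable def Ff {Ω : Type*} [Fintype Ω] (f : Ω → ℝ) (P : Set Ω) (t : ℝ) : ℝ :=
  unifP (f ⁻¹' Set.Icc t 1 ∩ Pᶜ) / unifP Pᶜ

lemma negFf_mono {Ω : Type*} [Fintype Ω] (f : Ω → ℝ) (P : Set Ω) :
    Monotone (fun t => -(Ff f P t)) := by
  intro s t hst
  simp only [neg_le_neg_iff]
  unfold Ff unifP
  have hsub : f ⁻¹' Set.Icc t 1 ∩ Pᶜ ⊆ f ⁻¹' Set.Icc s 1 ∩ Pᶜ := fun x hx =>
    ⟨⟨hst.trans hx.1.1, hx.1.2⟩, hx.2⟩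
  have h1 : ((f ⁻¹' Set.Icc t 1 ∩ Pᶜ).ncard : ℝ) ≤ (f ⁻¹' Set.Icc s 1 ∩ Pᶜ).ncard := by
    exact_mod_cast Set.ncard_le_ncard hsub (Set.toFinite _)
  gcongr

/-- The Lebesgue–Stieltjes measure `d(−F_f)` of the nondecreasing function `−F_f`. -/
noncomputable def dnegF {Ω : Type*} [Fintype Ω] (f : Ω → ℝ) (P : Set Ω) : Measure ℝ :=
  (negFf_mono f P).stieltjesFunction.measure

/-- The balanced version `T_f^b` of `T_f`: average of right and left limits. -/
noncomputable def Tfb {Ω : Type*} [Fintype Ω] (f : Ω → ℝ) (P : Set Ω) (t : ℝ) : ℝ :=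
  (Function.rightLim (Tf f P) t + Function.leftLim (Tf f P) t) / 2


open Filter Topology Finset Function

section AUX
variable {Ω : Type*} [Fintype Ω]

lemma gap_right (f : Ω → ℝ) (v : ℝ) : ∃ ε > 0, ∀ ω, v < f ω → v + ε ≤ f ω := by
  classical
  rcases (Finset.univ.filter (fun ω : Ω => v < f ω)).eq_empty_or_nonempty with h | h
  · refine ⟨1, one_pos, fun ω hω => ?_⟩
    have hm : ω ∈ Finset.univ.filter (fun ω : Ω => v < f ω) :=
      Finset.mem_filter.mpr ⟨Finset.mem_univ ω, hω⟩
    rw [h] at hm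
    simp at hm
  · refine ⟨(Finset.univ.filter (fun ω : Ω => v < f ω)).inf' h (fun ω => f ω - v), ?_, ?_⟩
    · apply (Finset.lt_inf'_iff _).2
      intro ω hω
      have := (Finset.mem_filter.mp hω).2
      linarith
    · intro ω hω
      have h1 : (Finset.univ.filter (fun ω : Ω => v < f ω)).inf' h (fun ω => f ω - v)
          ≤ f ω - v := Finset.inf'_le _ (Finset.mem_filter.mpr ⟨Finset.mem_univ ω, hω⟩)
      linarith

lemma gap_left (f : Ω → ℝ) (v : ℝ) : ∃ ε > 0, ∀ ω, f ω < v → f ω ≤ v - ε := by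
  obtain ⟨ε, hε, h⟩ := gap_right (fun ω => -f ω) (-v)
  refine ⟨ε, hε, fun ω hω => ?_⟩
  have := h ω (neg_lt_neg hω)
  linarith

lemma rightLim_const_on (g : ℝ → ℝ) (v c ε : ℝ) (hε : 0 < ε)
    (h : ∀ t ∈ Set.Ioo v (v+ε), g t = c) : Function.rightLim g v = c := by
  apply rightLim_eq_of_tendsto
  apply Tendsto.congr' _ tendsto_const_nhds
  filter_upwards [Ioo_mem_nhdsGT_of_mem (show v ∈ Set.Ico v (v+ε) from ⟨le_refl v, by linarith⟩)] with t ht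
  exact (h t ht).symm

lemma leftLim_const_on (g : ℝ → ℝ) (v c ε : ℝ) (hε : 0 < ε)
    (h : ∀ t ∈ Set.Ioo (v-ε) v, g t = c) : Function.leftLim g v = c := by
  apply leftLim_eq_of_tendsto
  apply Tendsto.congr' _ tendsto_const_nhds
  filter_upwards [Ioo_mem_nhdsLT_of_mem (show v ∈ Set.Ioc (v-ε) v from ⟨by linarith, le_refl v⟩)] with t ht
  exact (h t ht).symm

lemma ncard_eq_card_filter (S : Set Ω) [DecidablePred (· ∈ S)] :
    S.ncard = (Finset.univ.filter (· ∈ S)).card := by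
  rw [← Set.ncard_coe_finset]
  congr 1
  ext ω; simp

lemma Tf_eq (f : Ω → ℝ) (P : Set Ω) (hN : (Fintype.card Ω : ℝ) ≠ 0)
    (hf1 : ∀ ω, f ω ≤ 1) (t : ℝ) :
    Tf f P t = (({ω | t ≤ f ω} ∩ P).ncard : ℝ) / P.ncard := by
  have hset : f ⁻¹' Set.Icc t 1 ∩ P = {ω | t ≤ f ω} ∩ P := by
    ext ω
    simp only [Set.mem_inter_iff, Set.mem_preimage, Set.mem_Icc, Set.mem_setOf_eq,
      and_congr_left_iff]
    exact fun _ => ⟨fun h => h.1, fun h => ⟨h, hf1 ω⟩⟩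
  rw [Tf, unifP, unifP, hset, div_div_div_cancel_right₀ hN]

lemma Tf_const_right (f : Ω → ℝ) (P : Set Ω) (hN : (Fintype.card Ω : ℝ) ≠ 0)
    (hf1 : ∀ ω, f ω ≤ 1) (v : ℝ) :
    ∃ ε > 0, ∀ t ∈ Set.Ioo v (v+ε),
      Tf f P t = (({ω | v < f ω} ∩ P).ncard : ℝ) / P.ncard := by
  obtain ⟨ε, hε, hgap⟩ := gap_right f v
  refine ⟨ε, hε, fun t ht => ?_⟩
  rw [Tf_eq f P hN hf1 t]
  have hs : {ω | t ≤ f ω} ∩ P = {ω | v < f ω} ∩ P := by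
    ext ω
    simp only [Set.mem_inter_iff, Set.mem_setOf_eq, and_congr_left_iff]
    refine fun _ => ⟨fun h => lt_of_lt_of_le ht.1 h, fun h => ?_⟩
    have := hgap ω h
    have := ht.2
    linarith
  rw [hs]

lemma Tf_const_left (f : Ω → ℝ) (P : Set Ω) (hN : (Fintype.card Ω : ℝ) ≠ 0)
    (hf1 : ∀ ω, f ω ≤ 1) (v : ℝ) :
    ∃ ε > 0, ∀ t ∈ Set.Ioo (v-ε) v,
      Tf f P t = (({ω | v ≤ f ω} ∩ P).ncard : ℝ) / P.ncard := by
  obtain ⟨ε, hε, hgap⟩ := gap_left f v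
  refine ⟨ε, hε, fun t ht => ?_⟩
  rw [Tf_eq f P hN hf1 t]
  have hs : {ω | t ≤ f ω} ∩ P = {ω | v ≤ f ω} ∩ P := by
    ext ω
    simp only [Set.mem_inter_iff, Set.mem_setOf_eq, and_congr_left_iff]
    refine fun _ => ⟨fun h => ?_, fun h => le_trans (le_of_lt ht.2) h⟩
    by_contra hc
    push_neg at hc
    have := hgap ω hc
    have := ht.1
    linarith
  rw [hs]

lemma rightLim_Tf (f : Ω → ℝ) (P : Set Ω) (hN : (Fintype.card Ω : ℝ) ≠ 0)
    (hf1 : ∀ ω, f ω ≤ 1) (v : ℝ) :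
    Function.rightLim (Tf f P) v = (({ω | v < f ω} ∩ P).ncard : ℝ) / P.ncard := by
  obtain ⟨ε, hε, hc⟩ := Tf_const_right f P hN hf1 v
  exact rightLim_const_on _ v _ ε hε hc

lemma leftLim_Tf (f : Ω → ℝ) (P : Set Ω) (hN : (Fintype.card Ω : ℝ) ≠ 0)
    (hf1 : ∀ ω, f ω ≤ 1) (v : ℝ) :
    Function.leftLim (Tf f P) v = (({ω | v ≤ f ω} ∩ P).ncard : ℝ) / P.ncard := by
  obtain ⟨ε, hε, hc⟩ := Tf_const_left f P hN hf1 v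
  exact leftLim_const_on _ v _ ε hε hc

lemma Ff_eq_Tf (f : Ω → ℝ) (P : Set Ω) : Ff f P = Tf f Pᶜ := rfl

lemma G_apply (f : Ω → ℝ) (P : Set Ω) (hN : (Fintype.card Ω : ℝ) ≠ 0)
    (hf1 : ∀ ω, f ω ≤ 1) (v : ℝ) :
    (negFf_mono f P).stieltjesFunction v
      = -((({ω | v < f ω} ∩ Pᶜ).ncard : ℝ) / Pᶜ.ncard) := by
  rw [Monotone.stieltjesFunction_eq]
  obtain ⟨ε, hε, hc⟩ := Tf_const_right f Pᶜ hN hf1 v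
  refine rightLim_const_on _ v _ ε hε (fun t ht => ?_)
  show -(Ff f P t) = _
  rw [Ff_eq_Tf, hc t ht]

lemma leftLim_G (f : Ω → ℝ) (P : Set Ω) (hN : (Fintype.card Ω : ℝ) ≠ 0)
    (hf1 : ∀ ω, f ω ≤ 1) (v : ℝ) :
    Function.leftLim ((negFf_mono f P).stieltjesFunction) v
      = -((({ω | v ≤ f ω} ∩ Pᶜ).ncard : ℝ) / Pᶜ.ncard) := by
  obtain ⟨ε, hε, hc⟩ := Tf_const_left f Pᶜ hN hf1 v
  refine leftLim_const_on _ v _ ε hε (fun t ht => ?_)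
  rw [Monotone.stieltjesFunction_eq]
  refine rightLim_const_on _ t _ (v - t) (by linarith [ht.2]) (fun s hs => ?_)
  show -(Ff f P s) = _
  rw [Ff_eq_Tf, hc s ⟨by linarith [ht.1, hs.1], by linarith [hs.2]⟩]

lemma ncard_split (f : Ω → ℝ) (S : Set Ω) (v : ℝ) :
    ({ω | v ≤ f ω} ∩ S).ncard
      = ({ω | v < f ω} ∩ S).ncard + ({ω | f ω = v} ∩ S).ncard := by
  have hu : {ω | v ≤ f ω} ∩ S = ({ω | v < f ω} ∩ S) ∪ ({ω | f ω = v} ∩ S) := by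
    ext ω
    simp only [Set.mem_inter_iff, Set.mem_setOf_eq, Set.mem_union]
    constructor
    · rintro ⟨h1, h2⟩
      rcases lt_or_eq_of_le h1 with h | h
      · exact Or.inl ⟨h, h2⟩
      · exact Or.inr ⟨h.symm, h2⟩
    · rintro (⟨h1, h2⟩ | ⟨h1, h2⟩)
      · exact ⟨le_of_lt h1, h2⟩
      · exact ⟨le_of_eq h1.symm, h2⟩
  have hd : Disjoint ({ω | v < f ω} ∩ S) ({ω | f ω = v} ∩ S) := by
    rw [Set.disjoint_left]
    rintro ω ⟨h1, _⟩ ⟨h2, _⟩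
    simp only [Set.mem_setOf_eq] at h1 h2
    exact absurd h2 (ne_of_gt h1)
  rw [hu, Set.ncard_union_eq hd (Set.toFinite _) (Set.toFinite _)]

lemma dnegF_singleton (f : Ω → ℝ) (P : Set Ω) (hN : (Fintype.card Ω : ℝ) ≠ 0)
    (hf1 : ∀ ω, f ω ≤ 1) (v : ℝ) :
    dnegF f P {v} = ENNReal.ofReal ((({ω | f ω = v} ∩ Pᶜ).ncard : ℝ) / Pᶜ.ncard) := by
  rw [dnegF, StieltjesFunction.measure_singleton, G_apply f P hN hf1, leftLim_G f P hN hf1]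
  congr 1
  rw [ncard_split f Pᶜ v]
  push_cast
  ring

lemma dnegF_univ (f : Ω → ℝ) (P : Set Ω) (hN : (Fintype.card Ω : ℝ) ≠ 0)
    (hf : ∀ ω, f ω ∈ Set.Icc (0:ℝ) 1) (hPc : Pᶜ.Nonempty) :
    dnegF f P Set.univ = 1 := by
  have hm : (Pᶜ.ncard : ℝ) ≠ 0 := by
    have := (Set.ncard_pos (Set.toFinite Pᶜ)).mpr hPc
    positivity
  set G : StieltjesFunction ℝ := (negFf_mono f P).stieltjesFunction with hG
  have hbot : Filter.Tendsto G Filter.atBot (nhds (-1)) := by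
    apply Tendsto.congr' _ tendsto_const_nhds
    filter_upwards [Filter.eventually_le_atBot (-1 : ℝ)] with t ht
    symm
    rw [hG, Monotone.stieltjesFunction_eq]
    refine rightLim_const_on _ t _ (-t) (by linarith) (fun s hs => ?_)
    show -(Ff f P s) = -1
    rw [Ff_eq_Tf, Tf_eq f Pᶜ hN (fun ω => (hf ω).2) s]
    have hset : {ω | s ≤ f ω} ∩ Pᶜ = Pᶜ := by
      apply Set.inter_eq_self_of_subset_right
      intro ω _
      have h0 := (hf ω).1
      have := hs.2
      simp only [Set.mem_setOf_eq]
      linarith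
    rw [hset, div_self hm]
  have htop : Filter.Tendsto G Filter.atTop (nhds 0) := by
    apply Tendsto.congr' _ tendsto_const_nhds
    filter_upwards [Filter.eventually_ge_atTop (2 : ℝ)] with t ht
    symm
    rw [hG, Monotone.stieltjesFunction_eq]
    refine rightLim_const_on _ t _ 1 one_pos (fun s hs => ?_)
    show -(Ff f P s) = 0
    rw [Ff_eq_Tf, Tf_eq f Pᶜ hN (fun ω => (hf ω).2) s]
    have hset : {ω | s ≤ f ω} ∩ Pᶜ = ∅ := by
      ext ω
      simp only [Set.mem_inter_iff, Set.mem_setOf_eq, Set.mem_empty_iff_false, iff_false,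
        not_and]
      intro hsf _
      have := (hf ω).2
      have := hs.1
      linarith
    rw [hset]
    simp
  rw [dnegF, G.measure_univ hbot htop]
  norm_num
end AUX

theorem auc_sub_sep_prob_in_unit_half {Ω : Type*} [Fintype Ω] [Nonempty Ω] (f : Ω → ℝ) (P : Set Ω)
    (hf : ∀ ω, f ω ∈ Set.Icc (0:ℝ) 1) (hP : P.Nonempty) (hPc : Pᶜ.Nonempty) :
    0 ≤ ∫ x, Tfb f P x ∂(dnegF f P) - (unifP ({p : Ω × Ω | f p.1 > f p.2} ∩ P ×ˢ Pᶜ) / (unifP P * unifP Pᶜ)) ∧ ∫ x, Tfb f P x ∂(dnegF f P) - (unifP ({p : Ω × Ω | f p.1 > f p.2} ∩ P ×ˢ Pᶜ) / (unifP P * unifP Pᶜ)) ≤ 1 / 2 := by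
  classical
  have hN : (Fintype.card Ω : ℝ) ≠ 0 := by
    have := Fintype.card_pos (α := Ω)
    positivity
  have hf1 : ∀ ω, f ω ≤ 1 := fun ω => (hf ω).2
  set Pf : Finset Ω := Finset.univ.filter (· ∈ P) with hPf
  set Pc : Finset Ω := Finset.univ.filter (· ∈ Pᶜ) with hPcdef
  have hnP : P.ncard = Pf.card := ncard_eq_card_filter P
  have hmP : Pᶜ.ncard = Pc.card := ncard_eq_card_filter Pᶜ
  set n : ℝ := (Pf.card : ℝ) with hndef
  set m : ℝ := (Pc.card : ℝ) with hmdef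
  have hn : 0 < n := by
    rw [hndef]
    have h1 : 0 < P.ncard := (Set.ncard_pos (Set.toFinite _)).mpr hP
    rw [hnP] at h1
    exact_mod_cast h1
  have hm : 0 < m := by
    rw [hmdef]
    have h1 : 0 < Pᶜ.ncard := (Set.ncard_pos (Set.toFinite _)).mpr hPc
    rw [hmP] at h1
    exact_mod_cast h1
  -- counting functions
  set a : ℝ → ℝ := fun v => (({ω | v < f ω} ∩ P).ncard : ℝ) with hadef
  set b : ℝ → ℝ := fun v => (({ω | v ≤ f ω} ∩ P).ncard : ℝ) with hbdef
  set e : ℝ → ℝ := fun v => (({ω | f ω = v} ∩ Pᶜ).ncard : ℝ) with hedef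
  set eP : ℝ → ℝ := fun v => (({ω | f ω = v} ∩ P).ncard : ℝ) with hePdef
  have hTfb : ∀ v, Tfb f P v = (a v + b v) / (2 * n) := by
    intro v
    rw [Tfb, rightLim_Tf f P hN hf1, leftLim_Tf f P hN hf1, hnP, hadef, hbdef]
    simp only []
    rw [← hndef]
    ring
  set μ := dnegF f P with hμdef
  have hsing : ∀ v, μ {v} = ENNReal.ofReal (e v / m) := by
    intro v
    rw [hμdef, dnegF_singleton f P hN hf1 v, hmP, hedef]
  have huniv : μ Set.univ = 1 := dnegF_univ f P hN hf hPc
  haveI : IsFiniteMeasure μ := ⟨by rw [huniv]; exact ENNReal.one_lt_top⟩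
  set V : Finset ℝ := Pc.image f with hVdef
  have hfib : ∀ S : Set Ω, ∀ T : Finset Ω, (∀ ω, ω ∈ T ↔ ω ∈ S) →
      ∀ p : Ω → Prop,
      (({ω | p ω} ∩ S).ncard : ℝ) = ((T.filter (fun ω => p ω)).card : ℝ) := by
    intro S T hT p
    rw [ncard_eq_card_filter]
    have hset : Finset.univ.filter (· ∈ ({ω | p ω} ∩ S)) = T.filter (fun ω => p ω) := by
      ext ω
      simp [Set.mem_inter_iff, Set.mem_setOf_eq, hT ω, and_comm]
    rw [hset]
  have hefib : ∀ v, e v = ((Pc.filter (fun ω => f ω = v)).card : ℝ) := by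
    intro v
    exact hfib Pᶜ Pc (fun ω => by simp [hPcdef]) (fun ω => f ω = v)
  have hafib : ∀ v, a v = ((Pf.filter (fun ω => v < f ω)).card : ℝ) := by
    intro v
    exact hfib P Pf (fun ω => by simp [hPf]) (fun ω => v < f ω)
  have hsume : ∑ v ∈ V, e v = m := by
    have h1 : ∑ v ∈ V, (Pc.filter (fun ω => f ω = v)).card
        = (Pc.filter (fun i => f i ∈ V)).card :=
      Finset.sum_card_fiberwise_eq_card_filter Pc V f
    have h2 : Pc.filter (fun i => f i ∈ V) = Pc := by
      apply Finset.filter_true_of_mem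
      intro i hi
      exact Finset.mem_image_of_mem f hi
    calc ∑ v ∈ V, e v = ∑ v ∈ V, ((Pc.filter (fun ω => f ω = v)).card : ℝ) := by
          exact Finset.sum_congr rfl fun v _ => hefib v
      _ = ((∑ v ∈ V, (Pc.filter (fun ω => f ω = v)).card : ℕ) : ℝ) := by push_cast; ring
      _ = m := by rw [h1, h2, hmdef]
  have hμV : μ (V : Set ℝ) = 1 := by
    have hun : (V : Set ℝ) = ⋃ v ∈ V, {v} := by
      ext x; simp
    rw [hun, measure_biUnion_finset (fun x _ y _ hxy => Set.disjoint_singleton.mpr hxy)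
      (fun b _ => measurableSet_singleton b)]
    calc ∑ v ∈ V, μ {v} = ∑ v ∈ V, ENNReal.ofReal (e v / m) :=
          Finset.sum_congr rfl fun v _ => hsing v
      _ = ENNReal.ofReal (∑ v ∈ V, e v / m) :=
          (ENNReal.ofReal_sum_of_nonneg (fun v _ => by
            have : (0:ℝ) ≤ e v := by rw [hedef]; positivity
            positivity)).symm
      _ = 1 := by
          rw [← Finset.sum_div, hsume, div_self (ne_of_gt hm), ENNReal.ofReal_one]
  have hVc : μ ((V : Set ℝ))ᶜ = 0 := by
    rw [measure_compl V.finite_toSet.measurableSet (by rw [hμV]; exact ENNReal.one_ne_top),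
      huniv, hμV, tsub_self]
  have hInt : ∫ x, Tfb f P x ∂μ = ∑ v ∈ V, (e v / m) * Tfb f P v := by
    have hae : ∀ᵐ x ∂μ, x ∈ (V : Set ℝ) := by
      rw [MeasureTheory.ae_iff]
      exact hVc
    rw [← Measure.restrict_eq_self_of_ae_mem hae,
      MeasureTheory.integral_finset V IntegrableOn.finset]
    refine Finset.sum_congr rfl fun v _ => ?_
    rw [measureReal_def, hsing v, smul_eq_mul, ENNReal.toReal_ofReal]
    have : (0:ℝ) ≤ e v := by rw [hedef]; positivity
    positivity
  -- turn the integral into a sum over Pc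
  have hA : ∫ x, Tfb f P x ∂μ = ∑ ω' ∈ Pc, (a (f ω') + b (f ω')) / (2 * n * m) := by
    rw [hInt]
    have hmaps : ∀ i ∈ Pc, f i ∈ V := fun i hi => Finset.mem_image_of_mem f hi
    have hfw := Finset.sum_fiberwise_of_maps_to' hmaps
      (fun v => (a v + b v) / (2 * n * m))
    rw [← hfw]
    refine Finset.sum_congr rfl fun v _ => ?_
    rw [Finset.sum_const, nsmul_eq_mul, ← hefib v, hTfb v]
    ring
  -- the separation probability
  set K : ℕ := ((Pf ×ˢ Pc).filter (fun p => f p.2 < f p.1)).card with hKdef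
  have hPr : unifP ({p : Ω × Ω | f p.1 > f p.2} ∩ P ×ˢ Pᶜ) / (unifP P * unifP Pᶜ)
      = (K : ℝ) / (n * m) := by
    have hpair : ({p : Ω × Ω | f p.1 > f p.2} ∩ P ×ˢ Pᶜ).ncard = K := by
      rw [ncard_eq_card_filter, hKdef]
      congr 1
      ext p
      simp only [Finset.mem_filter, Finset.mem_univ, true_and, Finset.mem_product,
        Set.mem_inter_iff, Set.mem_setOf_eq, Set.mem_prod, hPf, hPcdef]
      tauto
    rw [unifP, unifP, unifP, hpair, hnP, hmP, Fintype.card_prod, ← hndef, ← hmdef]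
    rw [div_mul_div_comm]
    push_cast
    rw [div_div_div_cancel_right₀ (mul_ne_zero hN hN)]
  have hK : (K : ℝ) = ∑ ω' ∈ Pc, a (f ω') := by
    have h1 : K = ∑ ω' ∈ Pc, (Pf.filter (fun ω => f ω' < f ω)).card := by
      rw [hKdef, Finset.card_filter, Finset.sum_product, Finset.sum_comm]
      exact Finset.sum_congr rfl fun ω' _ => (Finset.card_filter _ _).symm
    rw [h1]
    push_cast
    exact Finset.sum_congr rfl fun ω' _ => (hafib (f ω')).symm
  -- b = a + eP
  have hbae : ∀ v, b v = a v + eP v := by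
    intro v
    rw [hbdef, hadef, hePdef]
    simp only []
    rw [ncard_split f P v]
    push_cast
    ring
  have heP0 : ∀ v, 0 ≤ eP v := by intro v; rw [hePdef]; positivity
  have hePn : ∀ v, eP v ≤ n := by
    intro v
    have h2 : ({ω | f ω = v} ∩ P).ncard ≤ P.ncard :=
      Set.ncard_le_ncard Set.inter_subset_right (Set.toFinite P)
    rw [hnP] at h2
    show ((({ω | f ω = v} ∩ P).ncard : ℝ)) ≤ ((Pf.card : ℝ))
    exact_mod_cast h2
  -- final computation
  have hdiff : ∫ x, Tfb f P x ∂μ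
      - unifP ({p : Ω × Ω | f p.1 > f p.2} ∩ P ×ˢ Pᶜ) / (unifP P * unifP Pᶜ)
      = ∑ ω' ∈ Pc, eP (f ω') / (2 * n * m) := by
    rw [hA, hPr, hK, Finset.sum_div, ← Finset.sum_sub_distrib]
    refine Finset.sum_congr rfl fun ω' _ => ?_
    rw [hbae (f ω')]
    ring
  rw [hμdef] at hdiff
  rw [hdiff]
  constructor
  · apply Finset.sum_nonneg
    intro ω' _
    exact div_nonneg (heP0 _) (by nlinarith)
  · calc ∑ ω' ∈ Pc, eP (f ω') / (2 * n * m) ≤ ∑ _ω' ∈ Pc, n / (2 * n * m) := by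
          apply Finset.sum_le_sum
          intro ω' _
          exact (div_le_div_iff_of_pos_right (by nlinarith)).mpr (hePn (f ω'))
      _ = 1 / 2 := by
          rw [Finset.sum_const, nsmul_eq_mul, ← mul_div_assoc]
          rw [div_eq_div_iff (by nlinarith : (2*n*m:ℝ) ≠ 0) (by norm_num : (2:ℝ) ≠ 0)]
          ring
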